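/- arXiv:1008.0425 — 2 statements merged into one kernel-verified Lean document; each statement's English description precedes it below -/
import Mathlib

section
/- There is no six-qubit CSS stabilizer code encoding one logical qubit that corrects an arbitrary single-qubit error; i.e., there is no set of five independent commuting generators on 6 qubits, each a tensor product of only X and I operators or only Z and I operators, such that every pair of distinct single-qubit Pauli errors either anticommutes with some generator or their product lies in the stabilizer group. -/
/-- An `n`-qubit Pauli operator (up to phase), represented by its Z-part and
X-part vectors over `F₂`. -/
abbrev PauliVec (n : ℕ) := (Fin n → ZMod 2) × (Fin n → ZMod 2)

/-- The symplectic form on `(F₂)^{2n}`: two Pauli operators commute iff this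
vanishes, and anticommute iff it equals `1`. -/
def symp {n : ℕ} (a b : PauliVec n) : ZMod 2 :=
  ∑ i, (a.1 i * b.2 i + a.2 i * b.1 i)

/-- A CSS generator consists of only `X` and `I` factors or only `Z` and `I`
factors: its Z-part or its X-part vanishes. -/
def IsCSS {n : ℕ} (g : PauliVec n) : Prop := g.1 = 0 ∨ g.2 = 0

/-- A Pauli operator of weight at most one: supported on (at most) a single
qubit. -/
def IsAtMostSingleQubit {n : ℕ} (e : PauliVec n) : Prop :=
  ∃ i : Fin n, ∀ j : Fin n, j ≠ i → e.1 j = 0 ∧ e.2 j = 0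

/-!
Let `C_X, C_Z ≤ 𝔽₂⁶` be spanned by the X-parts and the Z-parts of the generators. Each generator
is of one type, so `dim C_X + dim C_Z ≤ 5`. A `Z` error on qubit `i` has syndrome `c ↦ c i` on
`C_X`; correcting single-qubit errors forces these syndromes to be nonzero and forces
`Z_i Z_j` into the stabilizer, i.e. `e_i + e_j ∈ C_Z`, whenever two syndromes agree. Modulo `C_Z`
all qubits with the same syndrome are identified, so `6 ≤ dim C_Z + (2 ^ dim C_X - 1)`, and
symmetrically for `X` errors. Only `{dim C_X, dim C_Z} = {2, 3}` survives, and there the bound is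
tight: if `dim C_X = 2`, then `C_Z` is exactly the span of the `e_i + e_j` within the three syndrome
classes, so each class has exactly two qubits and the Z-checks cannot tell them apart. Hence `X`
errors have at most three syndromes, and `6 ≤ dim C_X + 3 = 5`.
-/

open Module Submodule Finset

theorem card_image_le_of_factorsThrough {ι α β : Type*} [Fintype ι] [DecidableEq α]
    [DecidableEq β] {f : ι → α} {g : ι → β} (h : g.FactorsThrough f) :
    #(univ.image g) ≤ #(univ.image f) := by
  rcases isEmpty_or_nonempty ι with hι | ⟨⟨i₀⟩⟩
  · simp
  refine card_le_card_of_surjOn (Function.extend f g fun _ ↦ g i₀) ?_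
  intro _ hb
  obtain ⟨i, -, rfl⟩ := mem_image.mp hb
  exact ⟨f i, mem_image_of_mem f (mem_univ i), h.extend_apply _ i⟩

section Rank

variable {K M N ι : Type*} [DivisionRing K] [AddCommGroup M] [Module K M]

theorem finrank_span_range_le_card_of_eq_zero [DecidableEq M] {v : ι → M} (s : Finset ι)
    (hv : ∀ i ∉ s, v i = 0) : finrank K (span K (Set.range v)) ≤ #s :=
  calc finrank K (span K (Set.range v)) ≤ finrank K (span K (s.image v : Set M)) := by
        refine finrank_mono (span_le.mpr ?_)
        rintro _ ⟨i, rfl⟩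
        by_cases hi : i ∈ s
        · exact subset_span (mem_image_of_mem v hi)
        · rw [hv i hi]
          exact zero_mem _
    _ ≤ #(s.image v) := finrank_span_finset_le_card _
    _ ≤ #s := card_image_le

theorem finrank_span_fst_add_finrank_span_snd_le [AddCommGroup N] [Module K N] [Fintype ι]
    {g : ι → M × N} (hg : ∀ i, (g i).1 = 0 ∨ (g i).2 = 0) :
    finrank K (span K (Set.range fun i ↦ (g i).1)) + finrank K (span K (Set.range fun i ↦ (g i).2))
      ≤ Fintype.card ι := by
  classical
  set s : Finset ι := {i | (g i).2 = 0}
  calc _ ≤ #s + #sᶜ := add_le_add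
        (finrank_span_range_le_card_of_eq_zero s fun i hi ↦
          (hg i).resolve_right (by simpa [s] using hi))
        (finrank_span_range_le_card_of_eq_zero sᶜ fun i hi ↦ by simpa [s] using hi)
    _ = Fintype.card ι := card_add_card_compl s

end Rank

section FiberDiff

variable {K ι α : Type*} [Field K] [Fintype ι] [DecidableEq ι]

theorem card_le_finrank_add_card_image [DecidableEq α] {f : ι → α} {U : Submodule K (ι → K)}
    (h : ∀ i j, f i = f j → Pi.single i 1 - Pi.single j 1 ∈ U) :
    Fintype.card ι ≤ finrank K U + #(univ.image f) := by
  classical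
  set F : ι → (ι → K) ⧸ U := fun i ↦ U.mkQ (Pi.single i 1)
  have hF : F.FactorsThrough f := fun i j hij ↦ (Submodule.Quotient.eq U).mpr (h i j hij)
  have hspan : span K (Set.range F) = ⊤ := by
    have : Set.range F = U.mkQ '' Set.range (Pi.basisFun K ι) := by
      rw [← Set.range_comp]
      ext
      simp [F]
    rw [this, span_image, (Pi.basisFun K ι).span_eq, Submodule.map_top, range_mkQ]
  have hquot : finrank K ((ι → K) ⧸ U) ≤ #(univ.image f) :=
    calc finrank K ((ι → K) ⧸ U) ≤ (Set.range F).toFinset.card := by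
          rw [← finrank_top, ← hspan]
          exact finrank_span_le_card _
      _ = #(univ.image F) := by rw [Set.toFinset_range]
      _ ≤ #(univ.image f) := card_image_le_of_factorsThrough hF
  have := U.finrank_quotient_add_finrank
  rw [finrank_fintype_fun_eq_card] at this
  omega

variable (K) in
def fiberDiffSpan (f : ι → α) : Submodule K (ι → K) :=
  span K {v | ∃ i j, f i = f j ∧ Pi.single i 1 - Pi.single j 1 = v}

theorem card_le_finrank_fiberDiffSpan_add [DecidableEq α] (f : ι → α) :
    Fintype.card ι ≤ finrank K (fiberDiffSpan K f) + #(univ.image f) :=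
  card_le_finrank_add_card_image fun i j h ↦ subset_span ⟨i, j, h, rfl⟩

theorem sum_fiber_eq_zero_of_mem_fiberDiffSpan [DecidableEq α] {f : ι → α} {c : ι → K}
    (hc : c ∈ fiberDiffSpan K f) (a : α) : ∑ i with f i = a, c i = 0 := by
  induction hc using span_induction with
  | mem v hv =>
    obtain ⟨i, j, hij, rfl⟩ := hv
    simp [sum_sub_distrib, sum_pi_single', hij]
  | zero => simp
  | add x y _ _ hx hy => simp [sum_add_distrib, hx, hy]
  | smul r x _ hx => simp [← mul_sum, hx]

theorem eq_of_mem_fiberDiffSpan [DecidableEq α] {f : ι → α}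
    (hdet : ∀ i, ∃ c ∈ fiberDiffSpan (ZMod 2) f, c i ≠ 0)
    (hcard : Fintype.card ι = 2 * #(univ.image f))
    {c : ι → ZMod 2} (hc : c ∈ fiberDiffSpan (ZMod 2) f) {a b : ι} (hab : f a = f b) :
    c a = c b := by
  -- a singleton fiber `{i}` would force every element of `fiberDiffSpan` to vanish at `i`
  have two_le_card_fiber : ∀ i, 2 ≤ #{j | f j = f i} := by
    intro i
    by_contra! hlt
    have hfiber : ({j | f j = f i} : Finset ι) = {i} :=
      eq_singleton_iff_unique_mem.mpr
        ⟨by simp, fun j hj ↦ card_le_one.mp (by omega) j hj i (by simp)⟩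
    obtain ⟨c, hc, hci⟩ := hdet i
    have := sum_fiber_eq_zero_of_mem_fiberDiffSpan hc (f i)
    rw [hfiber, sum_singleton] at this
    exact hci this
  have card_fiber : ∀ i, #{j | f j = f i} = 2 := by
    have hsum : ∑ v ∈ univ.image f, #{j | f j = v} = ∑ v ∈ univ.image f, 2 := by
      rw [← card_eq_sum_card_image, sum_const, smul_eq_mul, card_univ, hcard, mul_comm]
    intro i
    refine ((sum_eq_sum_iff_of_le ?_).mp hsum.symm (f i) (mem_image_of_mem f (mem_univ i))).symm
    intro _ hv
    obtain ⟨j, -, rfl⟩ := mem_image.mp hv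
    exact two_le_card_fiber j
  obtain rfl | hne := eq_or_ne a b
  · rfl
  have hpair : ({a, b} : Finset ι) ⊆ ({j | f j = f a} : Finset ι) := by
    simp [insert_subset_iff, hab]
  have hfiber : ({j | f j = f a} : Finset ι) = {a, b} :=
    (eq_of_subset_of_card_le hpair (by rw [card_fiber, card_pair hne])).symm
  have := sum_fiber_eq_zero_of_mem_fiberDiffSpan hc (f a)
  rwa [hfiber, sum_pair hne, CharTwo.add_eq_zero] at this

end FiberDiff

section Syndrome

variable {K ι : Type*} [Field K]

def syndrome (C : Submodule K (ι → K)) (i : ι) : Dual K C :=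
  (LinearMap.proj i).comp C.subtype

theorem syndrome_eq_syndrome_iff {C : Submodule K (ι → K)} {i j : ι} :
    syndrome C i = syndrome C j ↔ ∀ c ∈ C, c i = c j := by
  simp [LinearMap.ext_iff, syndrome]

theorem syndrome_ne_zero_iff {C : Submodule K (ι → K)} {i : ι} :
    syndrome C i ≠ 0 ↔ ∃ c ∈ C, c i ≠ 0 := by
  simp [LinearMap.ext_iff, syndrome]

/-- The checks `S` detect every single error, and errors with equal syndromes differ by an element
of `T`. For a CSS code this says that `Z` errors, checked by the X-parts `S` of the stabilizer,
are corrected modulo its Z-parts `T`. -/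
def DecodesModulo [DecidableEq ι] (S T : Submodule K (ι → K)) : Prop :=
  (∀ i, syndrome S i ≠ 0) ∧ ∀ i j, syndrome S i = syndrome S j → Pi.single i 1 - Pi.single j 1 ∈ T

end Syndrome

namespace DecodesModulo

open scoped Classical

variable {ι : Type*} [Fintype ι] [DecidableEq ι] {S T : Submodule (ZMod 2) (ι → ZMod 2)}

theorem card_le (h : DecodesModulo S T) :
    Fintype.card ι ≤ finrank (ZMod 2) T + #(univ.image (syndrome S)) :=
  card_le_finrank_add_card_image h.2

theorem card_image_syndrome_lt (h : ∀ i, syndrome S i ≠ 0) :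
    #(univ.image (syndrome S)) < 2 ^ finrank (ZMod 2) S := by
  have : Finite (Dual (ZMod 2) S) := Module.finite_of_finite (ZMod 2)
  have : Fintype (Dual (ZMod 2) S) := Fintype.ofFinite _
  calc #(univ.image (syndrome S)) ≤ #(univ.erase 0) :=
        card_le_card fun _ hx ↦ by
          obtain ⟨i, -, rfl⟩ := mem_image.mp hx
          exact mem_erase.mpr ⟨h i, mem_univ _⟩
    _ < Fintype.card (Dual (ZMod 2) S) := card_erase_lt_of_mem (mem_univ 0)
    _ = 2 ^ finrank (ZMod 2) S := by
      rw [card_eq_pow_finrank (K := ZMod 2), ZMod.card, Subspace.dual_finrank_eq]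

theorem card_image_syndrome_le (hST : DecodesModulo S T) (hTS : DecodesModulo T S)
    (hdim : finrank (ZMod 2) T + #(univ.image (syndrome S)) ≤ Fintype.card ι)
    (hcard : Fintype.card ι = 2 * #(univ.image (syndrome S))) :
    #(univ.image (syndrome T)) ≤ #(univ.image (syndrome S)) := by
  have hle : fiberDiffSpan (ZMod 2) (syndrome S) ≤ T :=
    span_le.mpr (by rintro _ ⟨i, j, hij, rfl⟩; exact hST.2 i j hij)
  have heq : fiberDiffSpan (ZMod 2) (syndrome S) = T :=
    eq_of_le_of_finrank_le hle (by
      have := card_le_finrank_fiberDiffSpan_add (K := ZMod 2) (syndrome S)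
      omega)
  have hfac : (syndrome T).FactorsThrough (syndrome S) := by
    intro a b hab
    rw [syndrome_eq_syndrome_iff]
    intro c hc
    rw [← heq] at hc
    refine eq_of_mem_fiberDiffSpan (fun i ↦ ?_) hcard hc hab
    rw [heq]
    exact syndrome_ne_zero_iff.mp (hTS.1 i)
  exact card_image_le_of_factorsThrough hfac

theorem false_of_finrank_le_two (hι : Fintype.card ι = 6)
    (hdim : finrank (ZMod 2) S + finrank (ZMod 2) T ≤ 5)
    (hST : DecodesModulo S T) (hTS : DecodesModulo T S) (hS : finrank (ZMod 2) S ≤ 2) : False := by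
  have hST_card := hST.card_le
  have hTS_card := hTS.card_le
  have hsyndS := card_image_syndrome_lt hST.1
  obtain ⟨hS2, hsyndS3⟩ : finrank (ZMod 2) S = 2 ∧ #(univ.image (syndrome S)) = 3 := by
    interval_cases finrank (ZMod 2) S <;> omega
  have := hST.card_image_syndrome_le hTS (by omega) (by omega)
  omega

theorem false_of_card_eq_six (hι : Fintype.card ι = 6)
    (hdim : finrank (ZMod 2) S + finrank (ZMod 2) T ≤ 5)
    (hST : DecodesModulo S T) (hTS : DecodesModulo T S) : False := by
  rcases le_or_gt (finrank (ZMod 2) S) 2 with hS | hT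
  · exact hST.false_of_finrank_le_two hι hdim hTS hS
  · exact hTS.false_of_finrank_le_two hι (by omega) hST (by omega)

end DecodesModulo

section Pauli

variable {n : ℕ}

theorem symp_add_right (a b c : PauliVec n) : symp a (b + c) = symp a b + symp a c := by
  simp only [symp, Prod.fst_add, Prod.snd_add, Pi.add_apply, ← sum_add_distrib]
  exact sum_congr rfl fun _ _ ↦ by ring

theorem symp_single_fst (a : PauliVec n) (i : Fin n) : symp a (Pi.single i 1, 0) = a.2 i := by
  simp [symp, Pi.single_apply]

theorem isAtMostSingleQubit_single_fst (i : Fin n) :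
    IsAtMostSingleQubit ((Pi.single i 1, 0) : PauliVec n) :=
  ⟨i, fun _ hj ↦ ⟨Pi.single_eq_of_ne hj 1, rfl⟩⟩

/-- Exchanging the `X` and `Z` parts: conjugation by a Hadamard gate on every qubit. -/
def pauliSwap (n : ℕ) : PauliVec n ≃ₗ[ZMod 2] PauliVec n :=
  LinearEquiv.prodComm _ _ _

theorem symp_pauliSwap (a b : PauliVec n) : symp (pauliSwap n a) b = symp a (pauliSwap n b) := by
  simp only [symp, pauliSwap, LinearEquiv.prodComm_apply, Prod.fst_swap, Prod.snd_swap]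
  exact sum_congr rfl fun _ _ ↦ add_comm _ _

theorem IsAtMostSingleQubit.pauliSwap {e : PauliVec n} (he : IsAtMostSingleQubit e) :
    IsAtMostSingleQubit (pauliSwap n e) :=
  let ⟨i, hi⟩ := he
  ⟨i, fun j hj ↦ (hi j hj).symm⟩

def CorrectsSingleQubitErrors {ι : Type*} (g : ι → PauliVec n) : Prop :=
  (∀ e : PauliVec n, IsAtMostSingleQubit e → e ≠ 0 → e ∉ span (ZMod 2) (Set.range g)) ∧
    ∀ e₁ e₂ : PauliVec n, IsAtMostSingleQubit e₁ → IsAtMostSingleQubit e₂ → e₁ ≠ e₂ →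
      (∃ i, symp (g i) (e₁ + e₂) = 1) ∨ e₁ + e₂ ∈ span (ZMod 2) (Set.range g)

namespace CorrectsSingleQubitErrors

variable {ι : Type*} {g : ι → PauliVec n}

theorem pauliSwap (h : CorrectsSingleQubitErrors g) :
    CorrectsSingleQubitErrors (pauliSwap n ∘ g) := by
  have hmem (e : PauliVec n) :
      e ∈ span (ZMod 2) (Set.range (_root_.pauliSwap n ∘ g)) ↔
        _root_.pauliSwap n e ∈ span (ZMod 2) (Set.range g) := by
    rw [Set.range_comp, ← LinearEquiv.coe_coe, span_image, Submodule.mem_map_equiv]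
    rfl
  refine ⟨fun e he he0 ↦ ?_, fun e₁ e₂ he₁ he₂ hne ↦ ?_⟩
  · rw [hmem]
    exact h.1 _ he.pauliSwap (by simpa using he0)
  · rcases h.2 _ _ he₁.pauliSwap he₂.pauliSwap (by simpa using hne) with ⟨i, hi⟩ | hspan
    · exact Or.inl ⟨i, by rwa [Function.comp_apply, symp_pauliSwap, map_add]⟩
    · exact Or.inr (by rwa [hmem, map_add])

theorem decodesModulo (h : CorrectsSingleQubitErrors g) :
    DecodesModulo (span (ZMod 2) (Set.range fun k ↦ (g k).2))
      (span (ZMod 2) (Set.range fun k ↦ (g k).1)) := by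
  refine ⟨fun i ↦ ?_, fun i j hij ↦ ?_⟩
  · rcases h.2 _ 0 (isAtMostSingleQubit_single_fst i) ⟨i, fun _ _ ↦ ⟨rfl, rfl⟩⟩ (by simp)
      with ⟨k, hk⟩ | hspan
    · rw [add_zero, symp_single_fst] at hk
      exact syndrome_ne_zero_iff.mpr ⟨_, subset_span ⟨k, rfl⟩, by simp [hk]⟩
    · rw [add_zero] at hspan
      exact absurd hspan (h.1 _ (isAtMostSingleQubit_single_fst i) (by simp))
  · obtain rfl | hne := eq_or_ne i j
    · simp
    rcases h.2 _ _ (isAtMostSingleQubit_single_fst i) (isAtMostSingleQubit_single_fst j)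
      (by simpa using (Pi.basisFun (ZMod 2) (Fin n)).injective.ne hne) with ⟨k, hk⟩ | hspan
    · have hgk : (g k).2 i = (g k).2 j :=
        syndrome_eq_syndrome_iff.mp hij _ (subset_span ⟨k, rfl⟩)
      rw [symp_add_right, symp_single_fst, symp_single_fst, hgk, CharTwo.add_self_eq_zero] at hk
      exact absurd hk zero_ne_one
    · have := mem_map_of_mem (f := LinearMap.fst (ZMod 2) _ _) hspan
      rw [map_span, ← Set.range_comp] at this
      rw [ZModModule.sub_eq_add]
      exact this

end CorrectsSingleQubitErrors

end Pauli

/-- There is no six-qubit CSS stabilizer code encoding one logical qubit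
(five independent commuting CSS generators, not fixing any qubit trivially)
that corrects an arbitrary single-qubit error. -/
theorem no_six_qubit_CSS_code :
    ¬ ∃ g : Fin 5 → PauliVec 6,
      (∀ i, IsCSS (g i)) ∧
      LinearIndependent (ZMod 2) g ∧
      (∀ i j, symp (g i) (g j) = 0) ∧
      -- nontriviality: no nonzero single-qubit Pauli lies in the stabilizer
      (∀ e : PauliVec 6, IsAtMostSingleQubit e → e ≠ 0 →
        e ∉ Submodule.span (ZMod 2) (Set.range g)) ∧
      -- correction of an arbitrary single-qubit error: every pair of distinct
      -- single-qubit Pauli errors either anticommutes with some generator or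
      -- its product lies in the stabilizer group
      (∀ e₁ e₂ : PauliVec 6, IsAtMostSingleQubit e₁ → IsAtMostSingleQubit e₂ →
        e₁ ≠ e₂ →
        (∃ i, symp (g i) (e₁ + e₂) = 1) ∨
          e₁ + e₂ ∈ Submodule.span (ZMod 2) (Set.range g)) := by
  rintro ⟨g, hCSS, -, -, hNontriv, hCorr⟩
  have hg : CorrectsSingleQubitErrors g := ⟨hNontriv, hCorr⟩
  exact hg.pauliSwap.decodesModulo.false_of_card_eq_six (Fintype.card_fin 6)
    ((finrank_span_fst_add_finrank_span_snd_le hCSS).trans_eq (Fintype.card_fin 5))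
    hg.decodesModulo
end

section
/- The value q = (M/N)·(2^{h(p)}/(2^{h(p)} − 1)) is the unique stationary point in q of the asymptotic rate function R(q) = q·h(M/(qN)) − q·h(p) (obtained from (1/N)log₂[C(qN,M)/C(qN,pqN)] via Stirling), where h is the binary entropy, assuming 0 < p < 1/2 and 0 < M/(qN) < 1. -/
/-!
Write `c = M/N` and `x = c/q = M/(qN)`. The perspective `q ↦ q h(c/q)` has derivative
`h(x) - x h'(x)`, and since `h'(x) = log₂ ((1 - x)/x)` this collapses to `-log₂ (1 - x)`.
Hence `R'(q) = 0` says `1 - x = 2^{-h(p)}`, i.e. `c/q = (2^{h(p)} - 1)/2^{h(p)}`, which is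
solved by inverting.
-/

noncomputable def binEnt (x : ℝ) : ℝ :=
  -x * Real.logb 2 x - (1-x) * Real.logb 2 (1-x)

open Real

theorem binEnt_eq_binEntropy_div_log_two : binEnt = fun x => binEntropy x / log 2 := by
  ext x
  simp only [binEnt, binEntropy, logb, log_inv]
  ring

theorem HasDerivAt.mul_comp_const_div {𝕜 : Type*} [NontriviallyNormedField 𝕜] {f : 𝕜 → 𝕜}
    {f' c q : 𝕜} (hf : HasDerivAt f f' (c / q)) (hq : q ≠ 0) :
    HasDerivAt (fun t => t * f (c / t)) (f (c / q) - c / q * f') q := by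
  have hinv : HasDerivAt (fun t => c / t) (-(c / q ^ 2)) q := by
    simpa [div_eq_mul_inv] using (hasDerivAt_inv hq).const_mul c
  refine ((hasDerivAt_id' q).mul (hf.comp q hinv)).congr_deriv ?_
  simp only [Function.comp_apply]
  field_simp
  ring

theorem hasDerivAt_mul_binEntropy_const_div {c q : ℝ} (hx₀ : c / q ≠ 0) (hx₁ : c / q ≠ 1) :
    HasDerivAt (fun t => t * binEntropy (c / t)) (-log (1 - c / q)) q := by
  refine ((hasDerivAt_binEntropy hx₀ hx₁).mul_comp_const_div
    (div_ne_zero_iff.1 hx₀).2).congr_deriv ?_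
  simp only [binEntropy, log_inv]
  ring

theorem hasDerivAt_mul_binEnt_const_div {c q : ℝ} (hx₀ : c / q ≠ 0) (hx₁ : c / q ≠ 1) :
    HasDerivAt (fun t => t * binEnt (c / t)) (-logb 2 (1 - c / q)) q := by
  simpa only [binEnt_eq_binEntropy_div_log_two, ← mul_div_assoc, logb, neg_div] using
    (hasDerivAt_mul_binEntropy_const_div hx₀ hx₁).div_const (log 2)

theorem div_eq_iff_comm₀ {G₀ : Type*} [CommGroupWithZero G₀] {a b c : G₀} (ha : a ≠ 0) :
    a / b = c ↔ a / c = b := by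
  constructor <;> rintro rfl <;> exact div_div_cancel₀ ha

theorem logb_one_sub_div_eq_neg_iff {b c q y : ℝ} (hb : 0 < b) (hb₁ : b ≠ 1)
    (hx₀ : 0 < c / q) (hx₁ : c / q < 1) :
    logb b (1 - c / q) = -y ↔ q = c * (b ^ y / (b ^ y - 1)) := by
  rw [logb_eq_iff_rpow_eq hb hb₁ (sub_pos.2 hx₁), rpow_neg hb.le, eq_sub_iff_add_eq,
    ← eq_sub_iff_add_eq', div_eq_iff_comm₀ (div_ne_zero_iff.1 hx₀.ne').1, eq_comm,
    div_eq_mul_inv, inv_eq_one_div (b ^ y), one_sub_div (rpow_pos_of_pos hb y).ne', inv_div]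

theorem unique_stationary_point_general (N M p : ℝ) (q : ℝ)
    (hfrac : 0 < M/(q*N)) (hfrac1 : M/(q*N) < 1) :
    deriv (fun q' : ℝ => q' * binEnt (M/(q'*N)) - q' * binEnt p) q = 0 ↔
      q = (M/N) * ((2:ℝ) ^ (binEnt p) / ((2:ℝ) ^ (binEnt p) - 1)) := by
  simp only [mul_comm _ N, ← div_div] at hfrac hfrac1 ⊢
  have hR := (hasDerivAt_mul_binEnt_const_div hfrac.ne' hfrac1.ne).sub
    ((hasDerivAt_id' q).mul_const (binEnt p))
  simp only [Pi.sub_def] at hR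
  rw [hR.deriv, one_mul, sub_eq_zero, neg_eq_iff_eq_neg]
  exact logb_one_sub_div_eq_neg_iff two_pos (by norm_num) hfrac hfrac1

/-- `q* = (M/N)·2^{h(p)}/(2^{h(p)} − 1)` is the unique stationary point in
`q` of the asymptotic rate function `R(q) = q·h(M/(qN)) − q·h(p)`: for every
`q > 0` with `0 < M/(qN) < 1`, the derivative of `R` at `q` vanishes iff
`q = q*`. -/
theorem unique_stationary_point (N M p : ℝ) (hN : 0 < N) (hM : 0 < M)
    (hp : 0 < p) (hp2 : p < 1/2) (q : ℝ) (hq : 0 < q)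
    (hfrac : 0 < M/(q*N)) (hfrac1 : M/(q*N) < 1) :
    deriv (fun q' : ℝ => q' * binEnt (M/(q'*N)) - q' * binEnt p) q = 0 ↔
      q = (M/N) * ((2:ℝ) ^ (binEnt p) / ((2:ℝ) ^ (binEnt p) - 1)) :=
  unique_stationary_point_general N M p q hfrac hfrac1
end
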